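/- arXiv:1804.03438 — 7 statements merged into one kernel-verified Lean document; each statement's English description precedes it below -/
import Mathlib

section
/- Let H be a complex separable infinite-dimensional Hilbert space, T a bounded bijective linear operator on H, and f₀ ∈ H such that (Tⁿf₀)_{n∈ℤ} is a frame for H with frame bounds A and B. Then for all f ∈ H and all n ∈ ℤ one has ‖Tⁿf‖ ≥ √(A/B)·‖f‖ and ‖(T*)ⁿf‖ ≥ √(A/B)·‖f‖. -/
/-!
For `g = (Tⁿ)* f` one has `⟪f, Tᵐ f₀⟫ = ⟪g, Tᵐ⁻ⁿ f₀⟫`, so `f` and `g` have the same frame sum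
and the frame bounds give `A ‖f‖² ≤ B ‖g‖²`: every `(Tⁿ)*` is bounded below by `c = √(A/B)`.
Since `(Tⁿ)*` has the right inverse `(Tⁿ)⁻¹*`, this gives `‖(Tⁿ)⁻¹‖ = ‖(Tⁿ)⁻¹*‖ ≤ c⁻¹`,
which is the lower bound for `Tⁿ` itself.
-/

open ContinuousLinearMap

theorem sqrt_div_mul_le_of_mul_sq_le_mul_sq {A B a b : ℝ} (hB : 0 < B) (hb : 0 ≤ b)
    (h : A * a ^ 2 ≤ B * b ^ 2) : Real.sqrt (A / B) * a ≤ b := by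
  have hsq : A / B * a ^ 2 ≤ b ^ 2 := by
    rw [div_mul_eq_mul_div, div_le_iff₀ hB]
    linarith
  calc Real.sqrt (A / B) * a ≤ |Real.sqrt (A / B) * a| := le_abs_self _
    _ = Real.sqrt (A / B * a ^ 2) := by
      rw [abs_mul, abs_of_nonneg (Real.sqrt_nonneg _), ← Real.sqrt_sq_eq_abs,
        Real.sqrt_mul' _ (sq_nonneg a)]
    _ ≤ Real.sqrt (b ^ 2) := Real.sqrt_le_sqrt hsq
    _ = b := Real.sqrt_sq hb

section BoundedBelow

variable {𝕜 E F : Type*} [RCLike 𝕜]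

theorem ContinuousLinearMap.opNorm_le_inv_of_comp_eq_id
    [NormedAddCommGroup E] [NormedSpace 𝕜 E] [NormedAddCommGroup F] [NormedSpace 𝕜 F]
    {L : E →L[𝕜] F} {R : F →L[𝕜] E} (hLR : L.comp R = ContinuousLinearMap.id 𝕜 F) {c : ℝ}
    (hc : 0 < c)
    (hL : ∀ x, c * ‖x‖ ≤ ‖L x‖) : ‖R‖ ≤ c⁻¹ := by
  refine opNorm_le_bound _ (inv_nonneg.2 hc.le) fun y => ?_
  have hy : L (R y) = y := by rw [← comp_apply, hLR, id_apply]
  rw [inv_mul_eq_div, le_div_iff₀' hc]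
  simpa only [hy] using hL (R y)

variable [NormedAddCommGroup E] [InnerProductSpace 𝕜 E] [CompleteSpace E]
  [NormedAddCommGroup F] [InnerProductSpace 𝕜 F] [CompleteSpace F]

theorem ContinuousLinearEquiv.mul_norm_le_norm_apply_of_adjoint (e : E ≃L[𝕜] F) {c : ℝ}
    (hc : 0 < c) (he : ∀ y, c * ‖y‖ ≤ ‖adjoint (e : E →L[𝕜] F) y‖) (x : E) :
    c * ‖x‖ ≤ ‖e x‖ := by
  have hinv : (adjoint (e : E →L[𝕜] F)).comp (adjoint (e.symm : F →L[𝕜] E)) =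
      ContinuousLinearMap.id 𝕜 E := by
    rw [← adjoint_comp, e.coe_symm_comp_coe, adjoint_id]
  have hnorm : ‖(e.symm : F →L[𝕜] E)‖ ≤ c⁻¹ := by
    rw [← adjoint.norm_map]
    exact opNorm_le_inv_of_comp_eq_id hinv hc he
  calc c * ‖x‖ = c * ‖(e.symm : F →L[𝕜] E) (e x)‖ := by simp
    _ ≤ c * (c⁻¹ * ‖e x‖) := by
      gcongr
      exact le_of_opNorm_le _ hnorm _
    _ = ‖e x‖ := by field_simp

end BoundedBelow

theorem tsum_norm_inner_adjoint_zpow_orbit {𝕜 H : Type*} [RCLike 𝕜] [NormedAddCommGroup H]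
    [InnerProductSpace 𝕜 H] [CompleteSpace H] (T : H ≃L[𝕜] H) (f₀ f : H) (n : ℤ) :
    ∑' m : ℤ, ‖(inner 𝕜 (adjoint ((T ^ n : H ≃L[𝕜] H) : H →L[𝕜] H) f) ((T ^ m) f₀) : 𝕜)‖ ^ 2 =
      ∑' m : ℤ, ‖(inner 𝕜 f ((T ^ m) f₀) : 𝕜)‖ ^ 2 := by
  have hshift : ∀ m : ℤ, (inner 𝕜 (adjoint ((T ^ n : H ≃L[𝕜] H) : H →L[𝕜] H) f)
      ((T ^ m) f₀) : 𝕜) = inner 𝕜 f ((T ^ (n + m)) f₀) := fun m => by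
    rw [adjoint_inner_left, zpow_add]
    rfl
  simp_rw [hshift]
  exact (Equiv.addLeft n).tsum_eq fun m => ‖(inner 𝕜 f ((T ^ m) f₀) : 𝕜)‖ ^ 2

theorem biinfinite_orbit_norm_bounded_below_general
    {H : Type*} [NormedAddCommGroup H] [InnerProductSpace ℂ H] [CompleteSpace H]
    (T : H ≃L[ℂ] H) (f₀ : H) (A B : ℝ) (hA : 0 < A) (hB : 0 < B)
    (hframe : ∀ f : H,
      A * ‖f‖ ^ 2 ≤ ∑' n : ℤ, ‖(inner ℂ f ((T ^ n) f₀) : ℂ)‖ ^ 2 ∧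
        ∑' n : ℤ, ‖(inner ℂ f ((T ^ n) f₀) : ℂ)‖ ^ 2 ≤ B * ‖f‖ ^ 2) :
    ∀ (f : H) (n : ℤ),
      Real.sqrt (A / B) * ‖f‖ ≤ ‖(T ^ n) f‖ ∧
      Real.sqrt (A / B) * ‖f‖ ≤
        ‖(ContinuousLinearMap.adjoint ((T ^ n : H ≃L[ℂ] H) : H →L[ℂ] H)) f‖ := by
  have hadjoint : ∀ (n : ℤ) (f : H), Real.sqrt (A / B) * ‖f‖ ≤
      ‖adjoint ((T ^ n : H ≃L[ℂ] H) : H →L[ℂ] H) f‖ := fun n f => by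
    refine sqrt_div_mul_le_of_mul_sq_le_mul_sq hB (norm_nonneg _) ?_
    calc A * ‖f‖ ^ 2 ≤ ∑' m : ℤ, ‖(inner ℂ f ((T ^ m) f₀) : ℂ)‖ ^ 2 := (hframe f).1
      _ = _ := (tsum_norm_inner_adjoint_zpow_orbit T f₀ f n).symm
      _ ≤ _ := (hframe _).2
  have hc : 0 < Real.sqrt (A / B) := Real.sqrt_pos.2 (div_pos hA hB)
  exact fun f n => ⟨(T ^ n).mul_norm_le_norm_apply_of_adjoint hc (hadjoint n) f, hadjoint n f⟩

/-- If `(Tⁿf₀)_{n∈ℤ}` is a frame for `H` with frame bounds `A` and `B` (with `T` a bounded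
bijective operator), then `‖Tⁿf‖ ≥ √(A/B)‖f‖` and `‖(T*)ⁿf‖ ≥ √(A/B)‖f‖` for all `f ∈ H`
and all `n ∈ ℤ`. -/
theorem biinfinite_orbit_norm_bounded_below
    {H : Type*} [NormedAddCommGroup H] [InnerProductSpace ℂ H] [CompleteSpace H]
    [TopologicalSpace.SeparableSpace H] (hdim : ¬ FiniteDimensional ℂ H)
    (T : H ≃L[ℂ] H) (f₀ : H) (A B : ℝ) (hA : 0 < A) (hB : 0 < B)
    (hframe : ∀ f : H,
      A * ‖f‖ ^ 2 ≤ ∑' n : ℤ, ‖(inner ℂ f ((T ^ n) f₀) : ℂ)‖ ^ 2 ∧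
        ∑' n : ℤ, ‖(inner ℂ f ((T ^ n) f₀) : ℂ)‖ ^ 2 ≤ B * ‖f‖ ^ 2) :
    ∀ (f : H) (n : ℤ),
      Real.sqrt (A / B) * ‖f‖ ≤ ‖(T ^ n) f‖ ∧
      Real.sqrt (A / B) * ‖f‖ ≤
        ‖(ContinuousLinearMap.adjoint ((T ^ n : H ≃L[ℂ] H) : H →L[ℂ] H)) f‖ :=
  biinfinite_orbit_norm_bounded_below_general T f₀ A B hA hB hframe
end

section
/- Let I = ℕ or I = ℤ, and let F = (f_n)_{n∈I} be a linearly independent frame for a complex separable infinite-dimensional Hilbert space H, with generating operator T : D_F → H and analysis operator C. Then the domain of the adjoint T* is a closed subspace of H, and dom T* = {g ∈ H : there exists h ∈ H such that ⟨f_{n+1}, g⟩ = ⟨f_n, h⟩ for all n ∈ I} = (LC)⁻¹(ran C), the preimage of the range of C under the bounded operator LC, where L is the left shift on ℓ²(I). -/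
/-!
Since the `fₙ` span `D_F`, the adjoint condition `⟨T x, g⟩ = ⟨x, h⟩` for all `x ∈ D_F` only has to
be tested on `x = fₙ`, where it reads `(C g)ₙ₊₁ = (C h)ₙ`, i.e. `L C g = C h`. The lower frame bound
makes `C` bounded below, so its range is closed, and `dom T* = (LC)⁻¹(ran C)` is closed as the
preimage of a closed set under a bounded operator.
-/

open MeasureTheory
noncomputable section

/-- A family `(F n)` is a frame for `H`. -/
def IsFrame {I H : Type*} [NormedAddCommGroup H] [InnerProductSpace ℂ H] (F : I → H) : Prop :=
  ∃ A B : ℝ, 0 < A ∧ 0 < B ∧ ∀ f : H,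
    A * ‖f‖ ^ 2 ≤ ∑' n : I, ‖(inner ℂ f (F n) : ℂ)‖ ^ 2 ∧
      ∑' n : I, ‖(inner ℂ f (F n) : ℂ)‖ ^ 2 ≤ B * ‖f‖ ^ 2

open Submodule Set

lemma Submodule.span_coe_preimage_eq_top {R M : Type*} [Semiring R] [AddCommMonoid M] [Module R M]
    {p : Submodule R M} {s : Set M} (hp : p = span R s) : span R (((↑) : p → M) ⁻¹' s) = ⊤ := by
  subst hp
  exact span_span_coe_preimage

theorem LinearPMap.forall_inner_apply_eq_iff_of_domain_eq_span {𝕜 E F ι : Type*} [RCLike 𝕜]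
    [NormedAddCommGroup E] [InnerProductSpace 𝕜 E] [NormedAddCommGroup F] [InnerProductSpace 𝕜 F]
    {T : E →ₗ.[𝕜] F} {v : ι → E} {w : ι → F} (hdom : T.domain = span 𝕜 (range v))
    (hT : ∀ i (hi : v i ∈ T.domain), T ⟨v i, hi⟩ = w i) (g : F) (h : E) :
    (∀ x : T.domain, inner 𝕜 (T x) g = inner 𝕜 (x : E) h) ↔
      ∀ i, inner 𝕜 (w i) g = inner 𝕜 (v i) h := by
  have hv : ∀ i, v i ∈ T.domain := fun i => hdom ▸ subset_span (mem_range_self i)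
  refine ⟨fun hx i => hT i (hv i) ▸ hx ⟨v i, hv i⟩, fun hi => ?_⟩
  -- after conjugation both sides are `𝕜`-linear in `x`, so they agree once they agree on the `v i`
  suffices (innerₛₗ 𝕜 g).comp T.toFun = (innerₛₗ 𝕜 h).comp T.domain.subtype by
    intro x
    rw [← inner_conj_symm, ← inner_conj_symm (x : E)]
    exact congrArg _ (LinearMap.congr_fun this x)
  refine LinearMap.ext_on (span_coe_preimage_eq_top hdom) ?_
  rintro ⟨-, hx⟩ ⟨i, rfl⟩
  change inner 𝕜 g (T ⟨v i, hx⟩) = inner 𝕜 h (v i)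
  rw [hT, ← inner_conj_symm, hi, inner_conj_symm]

lemma lp.norm_sq_eq_tsum {α : Type*} {E : α → Type*} [∀ i, NormedAddCommGroup (E i)]
    (f : lp E 2) : ‖f‖ ^ 2 = ∑' i, ‖f i‖ ^ 2 := by
  simpa using lp.norm_rpow_eq_tsum (p := 2) (by norm_num) f

theorem IsFrame.exists_pos_mul_norm_le {I H : Type*} [NormedAddCommGroup H] [InnerProductSpace ℂ H]
    {F : I → H} (hF : IsFrame F) {C : H → lp (fun _ : I => ℂ) 2}
    (hC : ∀ g n, C g n = inner ℂ (F n) g) : ∃ c > 0, ∀ g, c * ‖g‖ ≤ ‖C g‖ := by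
  obtain ⟨A, _, hA, _, hbounds⟩ := hF
  refine ⟨√A, Real.sqrt_pos.2 hA, fun g => ?_⟩
  have hsq : (√A * ‖g‖) ^ 2 ≤ ‖C g‖ ^ 2 := by
    rw [mul_pow, Real.sq_sqrt hA.le, lp.norm_sq_eq_tsum]
    simpa only [hC, norm_inner_symm] using (hbounds g).1
  exact (pow_le_pow_iff_left₀ (by positivity) (norm_nonneg _) two_ne_zero).1 hsq

theorem IsFrame.isClosed_range {I H : Type*} [NormedAddCommGroup H] [InnerProductSpace ℂ H]
    [CompleteSpace H] {F : I → H} (hF : IsFrame F) {C : H →L[ℂ] lp (fun _ : I => ℂ) 2}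
    (hC : ∀ g n, C g n = inner ℂ (F n) g) : IsClosed (Set.range C) := by
  obtain ⟨K, hK⟩ := antilipschitzWith_iff_exists_mul_le_norm.2 (hF.exists_pos_mul_norm_le hC)
  exact hK.isClosed_range C.uniformContinuous

theorem exists_inner_eq_iff_shift_mem_range {𝕜 I H : Type*} [RCLike 𝕜] [NormedAddCommGroup H]
    [InnerProductSpace 𝕜 H] {F : I → H} (s : I → I) {C : H → lp (fun _ : I => 𝕜) 2}
    (hC : ∀ g n, C g n = inner 𝕜 (F n) g) {L : lp (fun _ : I => 𝕜) 2 → lp (fun _ : I => 𝕜) 2}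
    (hL : ∀ c n, L c n = c (s n)) (g : H) :
    (∃ h, ∀ n, inner 𝕜 (F (s n)) g = inner 𝕜 (F n) h) ↔ L (C g) ∈ Set.range C := by
  refine exists_congr fun h => ⟨fun hh => lp.ext (funext fun n => ?_), fun hh n => ?_⟩
  · rw [hC, hL, hC, hh]
  · rw [← hC, ← hC, ← hL, hh]

theorem adjoint_domain_of_isFrame {I H : Type*} [NormedAddCommGroup H] [InnerProductSpace ℂ H]
    [CompleteSpace H] (s : I → I) (F : I → H) (T : H →ₗ.[ℂ] H)
    (C : H →L[ℂ] lp (fun _ : I => ℂ) 2) (L : lp (fun _ : I => ℂ) 2 →L[ℂ] lp (fun _ : I => ℂ) 2)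
    (hF : IsFrame F) (hdom : T.domain = span ℂ (range F))
    (hT : ∀ (n : I) (hn : F n ∈ T.domain), T ⟨F n, hn⟩ = F (s n))
    (hC : ∀ (g : H) (n : I), C g n = inner ℂ (F n) g)
    (hL : ∀ (c : lp (fun _ : I => ℂ) 2) (n : I), L c n = c (s n)) :
    IsClosed {g : H | ∃ h : H, ∀ x : T.domain, inner ℂ (T x) g = inner ℂ (x : H) h} ∧
    {g : H | ∃ h : H, ∀ x : T.domain, inner ℂ (T x) g = inner ℂ (x : H) h} =
      {g : H | ∃ h : H, ∀ n : I, inner ℂ (F (s n)) g = inner ℂ (F n) h} ∧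
    {g : H | ∃ h : H, ∀ x : T.domain, inner ℂ (T x) g = inner ℂ (x : H) h} =
      (fun g : H => L (C g)) ⁻¹' range C := by
  have hspan : {g : H | ∃ h : H, ∀ x : T.domain, inner ℂ (T x) g = inner ℂ (x : H) h} =
      {g : H | ∃ h : H, ∀ n : I, inner ℂ (F (s n)) g = inner ℂ (F n) h} :=
    Set.ext fun g => exists_congr fun h =>
      T.forall_inner_apply_eq_iff_of_domain_eq_span (w := fun n => F (s n)) hdom hT g h
  have hshift : {g : H | ∃ h : H, ∀ n : I, inner ℂ (F (s n)) g = inner ℂ (F n) h} =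
      (fun g : H => L (C g)) ⁻¹' range C :=
    Set.ext (exists_inner_eq_iff_shift_mem_range s hC hL)
  refine ⟨?_, hspan, hspan.trans hshift⟩
  rw [hspan, hshift]
  exact (hF.isClosed_range hC).preimage (L.continuous.comp C.continuous)

theorem adjoint_domain_of_generating_operator_general
    {H : Type*} [NormedAddCommGroup H] [InnerProductSpace ℂ H] [CompleteSpace H] :
    (∀ (F : ℕ → H) (T : H →ₗ.[ℂ] H) (C : H →L[ℂ] lp (fun _ : ℕ => ℂ) 2)
        (L : lp (fun _ : ℕ => ℂ) 2 →L[ℂ] lp (fun _ : ℕ => ℂ) 2),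
      LinearIndependent ℂ F → IsFrame F →
      T.domain = Submodule.span ℂ (Set.range F) →
      (∀ (n : ℕ) (hn : F n ∈ T.domain), T ⟨F n, hn⟩ = F (n + 1)) →
      (∀ (g : H) (n : ℕ), (C g) n = (inner ℂ (F n) g : ℂ)) →
      (∀ (c : lp (fun _ : ℕ => ℂ) 2) (n : ℕ), (L c) n = c (n + 1)) →
      IsClosed {g : H | ∃ h : H, ∀ x : T.domain, (inner ℂ (T x) g : ℂ) = inner ℂ (x : H) h} ∧
      {g : H | ∃ h : H, ∀ x : T.domain, (inner ℂ (T x) g : ℂ) = inner ℂ (x : H) h} =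
        {g : H | ∃ h : H, ∀ n : ℕ, (inner ℂ (F (n + 1)) g : ℂ) = inner ℂ (F n) h} ∧
      {g : H | ∃ h : H, ∀ x : T.domain, (inner ℂ (T x) g : ℂ) = inner ℂ (x : H) h} =
        (fun g : H => L (C g)) ⁻¹' Set.range ⇑C) ∧
    (∀ (F : ℤ → H) (T : H →ₗ.[ℂ] H) (C : H →L[ℂ] lp (fun _ : ℤ => ℂ) 2)
        (L : lp (fun _ : ℤ => ℂ) 2 →L[ℂ] lp (fun _ : ℤ => ℂ) 2),
      LinearIndependent ℂ F → IsFrame F →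
      T.domain = Submodule.span ℂ (Set.range F) →
      (∀ (n : ℤ) (hn : F n ∈ T.domain), T ⟨F n, hn⟩ = F (n + 1)) →
      (∀ (g : H) (n : ℤ), (C g) n = (inner ℂ (F n) g : ℂ)) →
      (∀ (c : lp (fun _ : ℤ => ℂ) 2) (n : ℤ), (L c) n = c (n + 1)) →
      IsClosed {g : H | ∃ h : H, ∀ x : T.domain, (inner ℂ (T x) g : ℂ) = inner ℂ (x : H) h} ∧
      {g : H | ∃ h : H, ∀ x : T.domain, (inner ℂ (T x) g : ℂ) = inner ℂ (x : H) h} =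
        {g : H | ∃ h : H, ∀ n : ℤ, (inner ℂ (F (n + 1)) g : ℂ) = inner ℂ (F n) h} ∧
      {g : H | ∃ h : H, ∀ x : T.domain, (inner ℂ (T x) g : ℂ) = inner ℂ (x : H) h} =
        (fun g : H => L (C g)) ⁻¹' Set.range ⇑C) := by
  exact ⟨fun F T C L _ => adjoint_domain_of_isFrame (· + 1) F T C L,
    fun F T C L _ => adjoint_domain_of_isFrame (· + 1) F T C L⟩

/-- Let `F = (fₙ)_{n∈I}` (`I = ℕ` or `I = ℤ`) be a linearly independent frame for `H` with
generating operator `T : D_F → H` (i.e. `T.domain = span{fₙ}` and `T fₙ = f_{n+1}`), analysis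
operator `C` and left shift `L`. Then the domain of `T*` is closed and
`dom T* = {g | ∃ h, ∀ n, ⟨f_{n+1}, g⟩ = ⟨fₙ, h⟩} = (LC)⁻¹(ran C)`. -/
theorem adjoint_domain_of_generating_operator
    {H : Type*} [NormedAddCommGroup H] [InnerProductSpace ℂ H] [CompleteSpace H]
    [TopologicalSpace.SeparableSpace H] (hdim : ¬ FiniteDimensional ℂ H) :
    (∀ (F : ℕ → H) (T : H →ₗ.[ℂ] H) (C : H →L[ℂ] lp (fun _ : ℕ => ℂ) 2)
        (L : lp (fun _ : ℕ => ℂ) 2 →L[ℂ] lp (fun _ : ℕ => ℂ) 2),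
      LinearIndependent ℂ F → IsFrame F →
      T.domain = Submodule.span ℂ (Set.range F) →
      (∀ (n : ℕ) (hn : F n ∈ T.domain), T ⟨F n, hn⟩ = F (n + 1)) →
      (∀ (g : H) (n : ℕ), (C g) n = (inner ℂ (F n) g : ℂ)) →
      (∀ (c : lp (fun _ : ℕ => ℂ) 2) (n : ℕ), (L c) n = c (n + 1)) →
      IsClosed {g : H | ∃ h : H, ∀ x : T.domain, (inner ℂ (T x) g : ℂ) = inner ℂ (x : H) h} ∧
      {g : H | ∃ h : H, ∀ x : T.domain, (inner ℂ (T x) g : ℂ) = inner ℂ (x : H) h} =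
        {g : H | ∃ h : H, ∀ n : ℕ, (inner ℂ (F (n + 1)) g : ℂ) = inner ℂ (F n) h} ∧
      {g : H | ∃ h : H, ∀ x : T.domain, (inner ℂ (T x) g : ℂ) = inner ℂ (x : H) h} =
        (fun g : H => L (C g)) ⁻¹' Set.range ⇑C) ∧
    (∀ (F : ℤ → H) (T : H →ₗ.[ℂ] H) (C : H →L[ℂ] lp (fun _ : ℤ => ℂ) 2)
        (L : lp (fun _ : ℤ => ℂ) 2 →L[ℂ] lp (fun _ : ℤ => ℂ) 2),
      LinearIndependent ℂ F → IsFrame F →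
      T.domain = Submodule.span ℂ (Set.range F) →
      (∀ (n : ℤ) (hn : F n ∈ T.domain), T ⟨F n, hn⟩ = F (n + 1)) →
      (∀ (g : H) (n : ℤ), (C g) n = (inner ℂ (F n) g : ℂ)) →
      (∀ (c : lp (fun _ : ℤ => ℂ) 2) (n : ℤ), (L c) n = c (n + 1)) →
      IsClosed {g : H | ∃ h : H, ∀ x : T.domain, (inner ℂ (T x) g : ℂ) = inner ℂ (x : H) h} ∧
      {g : H | ∃ h : H, ∀ x : T.domain, (inner ℂ (T x) g : ℂ) = inner ℂ (x : H) h} =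
        {g : H | ∃ h : H, ∀ n : ℤ, (inner ℂ (F (n + 1)) g : ℂ) = inner ℂ (F n) h} ∧
      {g : H | ∃ h : H, ∀ x : T.domain, (inner ℂ (T x) g : ℂ) = inner ℂ (x : H) h} =
        (fun g : H => L (C g)) ⁻¹' Set.range ⇑C) :=
  adjoint_domain_of_generating_operator_general
end
end

section
/- Let I = ℕ or I = ℤ, and let F = (f_n)_{n∈I} be a linearly independent frame for a complex separable infinite-dimensional Hilbert space H, with generating operator T : D_F → H. Then the adjoint T* is bounded, i.e., there exists a constant c ≥ 0 such that ‖T*g‖ ≤ c‖g‖ for all g in dom T*. -/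
open MeasureTheory
noncomputable section

/-!
The adjoint relation `⟨T fₙ, g⟩ = ⟨fₙ, h⟩` with `T fₙ = f_{n+1}` says that the frame coefficients
of `h` are those of `g` shifted by one. Since shifting is injective on the index set, the sum of
their squares is at most that of `g`, so the lower frame bound of `h` and the upper one of `g` give
`A ‖h‖² ≤ B ‖g‖²`.
-/

namespace IsFrame

variable {I H : Type*} [NormedAddCommGroup H] [InnerProductSpace ℂ H] {F : I → H}

theorem summable_norm_inner_sq (hF : IsFrame F) (g : H) :
    Summable fun n => ‖(inner ℂ g (F n) : ℂ)‖ ^ 2 := by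
  obtain ⟨A, _, hA, _, hbound⟩ := hF
  by_contra hs
  have hg : A * ‖g‖ ^ 2 ≤ 0 := by
    simpa only [tsum_eq_zero_of_not_summable hs] using (hbound g).1
  obtain rfl : g = 0 := by
    by_contra hg0
    have := mul_pos hA (pow_pos (norm_pos_iff.mpr hg0) 2)
    linarith
  simp at hs

theorem tsum_norm_inner_comp_le (hF : IsFrame F) {s : I → I} (hs : s.Injective) (g : H) :
    ∑' n, ‖(inner ℂ g (F (s n)) : ℂ)‖ ^ 2 ≤ ∑' n, ‖(inner ℂ g (F n) : ℂ)‖ ^ 2 :=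
  tsum_comp_le_tsum_of_inj (hF.summable_norm_inner_sq g) (fun _ => by positivity) hs

theorem exists_norm_le_of_norm_inner_eq_comp (hF : IsFrame F) {s : I → I} (hs : s.Injective) :
    ∃ c : ℝ, 0 ≤ c ∧ ∀ g h : H,
      (∀ n, ‖(inner ℂ h (F n) : ℂ)‖ = ‖(inner ℂ g (F (s n)) : ℂ)‖) → ‖h‖ ≤ c * ‖g‖ := by
  have hshift := hF.tsum_norm_inner_comp_le hs
  obtain ⟨A, B, hA, hB, hbound⟩ := hF
  refine ⟨√(B / A), by positivity, fun g h hgh => ?_⟩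
  have hAB : A * ‖h‖ ^ 2 ≤ B * ‖g‖ ^ 2 :=
    calc A * ‖h‖ ^ 2 ≤ ∑' n, ‖(inner ℂ h (F n) : ℂ)‖ ^ 2 := (hbound h).1
      _ = ∑' n, ‖(inner ℂ g (F (s n)) : ℂ)‖ ^ 2 := by simp only [hgh]
      _ ≤ ∑' n, ‖(inner ℂ g (F n) : ℂ)‖ ^ 2 := hshift g
      _ ≤ B * ‖g‖ ^ 2 := (hbound g).2
  rw [← pow_le_pow_iff_left₀ (norm_nonneg h) (by positivity) two_ne_zero, mul_pow,
    Real.sq_sqrt (by positivity), div_mul_eq_mul_div, le_div_iff₀ hA]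
  linarith

end IsFrame

theorem LinearPMap.norm_inner_eq_of_adjoint_pair {I H : Type*} [NormedAddCommGroup H]
    [InnerProductSpace ℂ H] {F : I → H} {s : I → I} {T : H →ₗ.[ℂ] H}
    (hdom : ∀ n, F n ∈ T.domain) (hT : ∀ n (hn : F n ∈ T.domain), T ⟨F n, hn⟩ = F (s n))
    {g h : H} (hgh : ∀ x : T.domain, (inner ℂ (T x) g : ℂ) = inner ℂ (x : H) h) (n : I) :
    ‖(inner ℂ h (F n) : ℂ)‖ = ‖(inner ℂ g (F (s n)) : ℂ)‖ := by
  have hpair := hgh ⟨F n, hdom n⟩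
  rw [hT] at hpair
  rw [norm_inner_symm, ← hpair, norm_inner_symm]

theorem IsFrame.exists_adjoint_bound_of_shift {I H : Type*} [NormedAddCommGroup H]
    [InnerProductSpace ℂ H] {F : I → H} (hF : IsFrame F) {s : I → I} (hs : s.Injective)
    {T : H →ₗ.[ℂ] H} (hdom : ∀ n, F n ∈ T.domain)
    (hT : ∀ n (hn : F n ∈ T.domain), T ⟨F n, hn⟩ = F (s n)) :
    ∃ c : ℝ, 0 ≤ c ∧ ∀ g h : H,
      (∀ x : T.domain, (inner ℂ (T x) g : ℂ) = inner ℂ (x : H) h) → ‖h‖ ≤ c * ‖g‖ := by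
  obtain ⟨c, hc, hbound⟩ := hF.exists_norm_le_of_norm_inner_eq_comp hs
  exact ⟨c, hc, fun g h hgh =>
    hbound g h (LinearPMap.norm_inner_eq_of_adjoint_pair hdom hT hgh)⟩

theorem adjoint_of_generating_operator_bounded_general
    {H : Type*} [NormedAddCommGroup H] [InnerProductSpace ℂ H] :
    (∀ (F : ℕ → H) (T : H →ₗ.[ℂ] H),
      LinearIndependent ℂ F → IsFrame F →
      T.domain = Submodule.span ℂ (Set.range F) →
      (∀ (n : ℕ) (hn : F n ∈ T.domain), T ⟨F n, hn⟩ = F (n + 1)) →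
      ∃ c : ℝ, 0 ≤ c ∧ ∀ g h : H,
        (∀ x : T.domain, (inner ℂ (T x) g : ℂ) = inner ℂ (x : H) h) → ‖h‖ ≤ c * ‖g‖) ∧
    (∀ (F : ℤ → H) (T : H →ₗ.[ℂ] H),
      LinearIndependent ℂ F → IsFrame F →
      T.domain = Submodule.span ℂ (Set.range F) →
      (∀ (n : ℤ) (hn : F n ∈ T.domain), T ⟨F n, hn⟩ = F (n + 1)) →
      ∃ c : ℝ, 0 ≤ c ∧ ∀ g h : H,
        (∀ x : T.domain, (inner ℂ (T x) g : ℂ) = inner ℂ (x : H) h) → ‖h‖ ≤ c * ‖g‖) := by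
  refine ⟨fun F T _ hF hdom hT => ?_, fun F T _ hF hdom hT => ?_⟩ <;>
  exact hF.exists_adjoint_bound_of_shift (add_left_injective 1)
    (fun n => by rw [hdom]; exact Submodule.subset_span ⟨n, rfl⟩) hT

/-- Let `F = (fₙ)_{n∈I}` (`I = ℕ` or `I = ℤ`) be a linearly independent frame for `H` with
generating operator `T : D_F → H` (i.e. `T.domain = span{fₙ}` and `T fₙ = f_{n+1}`). Then the
adjoint `T*` is bounded: there is `c ≥ 0` with `‖T*g‖ ≤ c‖g‖` for all `g ∈ dom T*`
(`h = T*g` being characterized by `⟨Tf, g⟩ = ⟨f, h⟩` for all `f` in the domain). -/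
theorem adjoint_of_generating_operator_bounded
    {H : Type*} [NormedAddCommGroup H] [InnerProductSpace ℂ H] [CompleteSpace H]
    [TopologicalSpace.SeparableSpace H] (hdim : ¬ FiniteDimensional ℂ H) :
    (∀ (F : ℕ → H) (T : H →ₗ.[ℂ] H),
      LinearIndependent ℂ F → IsFrame F →
      T.domain = Submodule.span ℂ (Set.range F) →
      (∀ (n : ℕ) (hn : F n ∈ T.domain), T ⟨F n, hn⟩ = F (n + 1)) →
      ∃ c : ℝ, 0 ≤ c ∧ ∀ g h : H,
        (∀ x : T.domain, (inner ℂ (T x) g : ℂ) = inner ℂ (x : H) h) → ‖h‖ ≤ c * ‖g‖) ∧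
    (∀ (F : ℤ → H) (T : H →ₗ.[ℂ] H),
      LinearIndependent ℂ F → IsFrame F →
      T.domain = Submodule.span ℂ (Set.range F) →
      (∀ (n : ℤ) (hn : F n ∈ T.domain), T ⟨F n, hn⟩ = F (n + 1)) →
      ∃ c : ℝ, 0 ≤ c ∧ ∀ g h : H,
        (∀ x : T.domain, (inner ℂ (T x) g : ℂ) = inner ℂ (x : H) h) → ‖h‖ ≤ c * ‖g‖) :=
  adjoint_of_generating_operator_bounded_general
end
end

section
/- Let I = ℕ or I = ℤ, and let F = (f_n)_{n∈I} be a frame for a complex separable infinite-dimensional Hilbert space H with synthesis operator U : ℓ²(I) → H, and suppose ker U is invariant under the right shift R on ℓ²(I). Then the unique bounded linear operator T : H → H with T f_n = f_{n+1} for all n ∈ I is given by T = U R U†, where U† = U*(UU*)⁻¹ is the pseudo-inverse of U (the frame operator S = UU* being positive and boundedly invertible). -/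
open MeasureTheory
noncomputable section

/-!
`U` sends the standard vector `e_n` to `f_n` and `R` sends it to `e_{n+1}`, so the bounded
operators `T U` and `U R` agree on every `e_n`, hence on all of `ℓ²(I)`. As `U U* S⁻¹ = id`,
`T = T U U* S⁻¹ = U R U* S⁻¹`.
-/

section

variable {𝕜 α F : Type*} {E : α → Type*} [NormedField 𝕜] [∀ i, NormedAddCommGroup (E i)]
  [∀ i, NormedSpace 𝕜 (E i)] [NormedAddCommGroup F] [NormedSpace 𝕜 F]
  [DecidableEq α] {p : ENNReal} [Fact (1 ≤ p)]

theorem lp.continuousLinearMap_ext_single (hp : p ≠ ⊤) {A B : lp E p →L[𝕜] F}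
    (h : ∀ i a, A (lp.single p i a) = B (lp.single p i a)) : A = B := by
  ext c
  have hc := lp.hasSum_single hp c
  exact (A.hasSum hc).unique (by simpa only [← h] using B.hasSum hc)

end

theorem eq_comp_of_comp_eq_comp {𝕜 X Y : Type*} [NormedField 𝕜] [NormedAddCommGroup X]
    [NormedSpace 𝕜 X] [NormedAddCommGroup Y] [NormedSpace 𝕜 Y] {T : Y →L[𝕜] Y} {U : X →L[𝕜] Y}
    {R : X →L[𝕜] X} {V : Y →L[𝕜] X} (hTU : T ∘L U = U ∘L R) (hUV : U ∘L V = .id 𝕜 Y) :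
    T = (U ∘L R) ∘L V := by
  rw [← hTU, ContinuousLinearMap.comp_assoc, hUV, ContinuousLinearMap.comp_id]

section

variable {I H : Type*} [NormedAddCommGroup H] [NormedSpace ℂ H] {p : ENNReal}

theorem synthesis_single [DecidableEq I] {F : I → H} {U : lp (fun _ : I => ℂ) p → H}
    (hU : ∀ c, U c = ∑' n, c n • F n) (i : I) (a : ℂ) :
    U (lp.single p i a) = a • F i := by
  rw [hU, tsum_eq_single i fun n hn => by
      rw [lp.single_apply_ne (E := fun _ : I => ℂ) p i a hn, zero_smul],
    lp.single_apply_self (E := fun _ : I => ℂ)]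

theorem comp_synthesis_eq_synthesis_comp [DecidableEq I] [Fact (1 ≤ p)] (hp : p ≠ ⊤)
    {σ : I → I} {F : I → H} {U : lp (fun _ : I => ℂ) p →L[ℂ] H}
    {R : lp (fun _ : I => ℂ) p →L[ℂ] lp (fun _ : I => ℂ) p} {T : H →L[ℂ] H}
    (hU : ∀ c, U c = ∑' n, c n • F n) (hR : ∀ i a, R (lp.single p i a) = lp.single p (σ i) a)
    (hT : ∀ n, T (F n) = F (σ n)) :
    T ∘L U = U ∘L R :=
  lp.continuousLinearMap_ext_single hp fun i a => by
    simp only [ContinuousLinearMap.comp_apply, synthesis_single hU, hR, map_smul, hT]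

end

theorem shift_single_nat {p : ENNReal} {R : lp (fun _ : ℕ => ℂ) p → lp (fun _ : ℕ => ℂ) p}
    (hR : ∀ c, R c 0 = 0 ∧ ∀ n, R c (n + 1) = c n) (i : ℕ) (a : ℂ) :
    R (lp.single p i a) = lp.single p (i + 1) a := by
  ext (_ | j)
  · rw [(hR _).1, lp.single_apply_ne (E := fun _ : ℕ => ℂ) p (i + 1) a (by omega)]
  · simp only [(hR _).2, lp.single_apply (E := fun _ : ℕ => ℂ), Pi.single_apply,
      Nat.add_right_cancel_iff]

theorem shift_single_int {p : ENNReal} {R : lp (fun _ : ℤ => ℂ) p → lp (fun _ : ℤ => ℂ) p}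
    (hR : ∀ c n, R c n = c (n - 1)) (i : ℤ) (a : ℂ) :
    R (lp.single p i a) = lp.single p (i + 1) a := by
  ext j
  simp only [hR, lp.single_apply (E := fun _ : ℤ => ℂ), Pi.single_apply, sub_eq_iff_eq_add]

theorem generating_operator_eq_URUdagger_general
    {H : Type*} [NormedAddCommGroup H] [InnerProductSpace ℂ H] [CompleteSpace H] :
    (∀ (F : ℕ → H) (U : lp (fun _ : ℕ => ℂ) 2 →L[ℂ] H)
        (R : lp (fun _ : ℕ => ℂ) 2 →L[ℂ] lp (fun _ : ℕ => ℂ) 2) (Sinv : H →L[ℂ] H)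
        (T : H →L[ℂ] H),
      IsFrame F →
      (∀ c : lp (fun _ : ℕ => ℂ) 2, U c = ∑' n : ℕ, c n • F n) →
      (∀ c : lp (fun _ : ℕ => ℂ) 2, (R c) 0 = 0 ∧ ∀ n : ℕ, (R c) (n + 1) = c n) →
      (∀ c : lp (fun _ : ℕ => ℂ) 2, U c = 0 → U (R c) = 0) →
      ((U ∘L ContinuousLinearMap.adjoint U) ∘L Sinv = ContinuousLinearMap.id ℂ H) →
      (Sinv ∘L (U ∘L ContinuousLinearMap.adjoint U) = ContinuousLinearMap.id ℂ H) →
      (∀ n : ℕ, T (F n) = F (n + 1)) →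
      T = ((U ∘L R) ∘L ContinuousLinearMap.adjoint U) ∘L Sinv) ∧
    (∀ (F : ℤ → H) (U : lp (fun _ : ℤ => ℂ) 2 →L[ℂ] H)
        (R : lp (fun _ : ℤ => ℂ) 2 →L[ℂ] lp (fun _ : ℤ => ℂ) 2) (Sinv : H →L[ℂ] H)
        (T : H →L[ℂ] H),
      IsFrame F →
      (∀ c : lp (fun _ : ℤ => ℂ) 2, U c = ∑' n : ℤ, c n • F n) →
      (∀ (c : lp (fun _ : ℤ => ℂ) 2) (n : ℤ), (R c) n = c (n - 1)) →
      (∀ c : lp (fun _ : ℤ => ℂ) 2, U c = 0 → U (R c) = 0) →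
      ((U ∘L ContinuousLinearMap.adjoint U) ∘L Sinv = ContinuousLinearMap.id ℂ H) →
      (Sinv ∘L (U ∘L ContinuousLinearMap.adjoint U) = ContinuousLinearMap.id ℂ H) →
      (∀ n : ℤ, T (F n) = F (n + 1)) →
      T = ((U ∘L R) ∘L ContinuousLinearMap.adjoint U) ∘L Sinv) := by
  have : Fact ((1 : ENNReal) ≤ 2) := ⟨by norm_num⟩
  constructor
  · intro F U R Sinv T _ hU hR _ hUV _ hT
    rw [ContinuousLinearMap.comp_assoc] at hUV ⊢
    exact eq_comp_of_comp_eq_comp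
      (comp_synthesis_eq_synthesis_comp ENNReal.ofNat_ne_top hU (shift_single_nat hR) hT) hUV
  · intro F U R Sinv T _ hU hR _ hUV _ hT
    rw [ContinuousLinearMap.comp_assoc] at hUV ⊢
    exact eq_comp_of_comp_eq_comp
      (comp_synthesis_eq_synthesis_comp ENNReal.ofNat_ne_top hU (shift_single_int hR) hT) hUV

/-- For a frame `F = (fₙ)_{n∈I}` (`I = ℕ` or `I = ℤ`) with synthesis operator `U` whose
kernel is invariant under the right shift `R` on `ℓ²(I)`, the unique bounded operator `T`
with `T fₙ = fₙ₊₁` is given by `T = U R U†`, where `U† = U*(UU*)⁻¹` is the pseudo-inverse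
of `U` (here `Sinv` is the bounded inverse of the frame operator `S = UU*`). -/
theorem generating_operator_eq_URUdagger
    {H : Type*} [NormedAddCommGroup H] [InnerProductSpace ℂ H] [CompleteSpace H]
    [TopologicalSpace.SeparableSpace H] (hdim : ¬ FiniteDimensional ℂ H) :
    (∀ (F : ℕ → H) (U : lp (fun _ : ℕ => ℂ) 2 →L[ℂ] H)
        (R : lp (fun _ : ℕ => ℂ) 2 →L[ℂ] lp (fun _ : ℕ => ℂ) 2) (Sinv : H →L[ℂ] H)
        (T : H →L[ℂ] H),
      IsFrame F →
      (∀ c : lp (fun _ : ℕ => ℂ) 2, U c = ∑' n : ℕ, c n • F n) →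
      (∀ c : lp (fun _ : ℕ => ℂ) 2, (R c) 0 = 0 ∧ ∀ n : ℕ, (R c) (n + 1) = c n) →
      (∀ c : lp (fun _ : ℕ => ℂ) 2, U c = 0 → U (R c) = 0) →
      ((U ∘L ContinuousLinearMap.adjoint U) ∘L Sinv = ContinuousLinearMap.id ℂ H) →
      (Sinv ∘L (U ∘L ContinuousLinearMap.adjoint U) = ContinuousLinearMap.id ℂ H) →
      (∀ n : ℕ, T (F n) = F (n + 1)) →
      T = ((U ∘L R) ∘L ContinuousLinearMap.adjoint U) ∘L Sinv) ∧
    (∀ (F : ℤ → H) (U : lp (fun _ : ℤ => ℂ) 2 →L[ℂ] H)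
        (R : lp (fun _ : ℤ => ℂ) 2 →L[ℂ] lp (fun _ : ℤ => ℂ) 2) (Sinv : H →L[ℂ] H)
        (T : H →L[ℂ] H),
      IsFrame F →
      (∀ c : lp (fun _ : ℤ => ℂ) 2, U c = ∑' n : ℤ, c n • F n) →
      (∀ (c : lp (fun _ : ℤ => ℂ) 2) (n : ℤ), (R c) n = c (n - 1)) →
      (∀ c : lp (fun _ : ℤ => ℂ) 2, U c = 0 → U (R c) = 0) →
      ((U ∘L ContinuousLinearMap.adjoint U) ∘L Sinv = ContinuousLinearMap.id ℂ H) →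
      (Sinv ∘L (U ∘L ContinuousLinearMap.adjoint U) = ContinuousLinearMap.id ℂ H) →
      (∀ n : ℤ, T (F n) = F (n + 1)) →
      T = ((U ∘L R) ∘L ContinuousLinearMap.adjoint U) ∘L Sinv) :=
  generating_operator_eq_URUdagger_general
end
end

section
/- Let H₁ and H₂ be complex Hilbert spaces, T_j a bounded linear operator on H_j and f_j ∈ H_j for j = 1,2, and suppose (T₁,f₁) and (T₂,f₂) are similar via a bounded bijective operator V : H₁ → H₂. Then (T₁ⁿf₁)_{n∈ℕ} is a frame for H₁ if and only if (T₂ⁿf₂)_{n∈ℕ} is a frame for H₂. Moreover, in the affirmative case V is the unique bounded bijective operator with T₂ = V T₁ V⁻¹ and f₂ = V f₁. -/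
/-!
Since `⟪g, V x⟫ = ⟪V† g, x⟫` and `V†` is again an isomorphism, the frame inequalities for
`(V (T₁ⁿ f₁))ₙ = (T₂ⁿ f₂)ₙ` at `g` are those for `(T₁ⁿ f₁)ₙ` at `V† g`, up to the norms of `V†` and
its inverse. The lower frame bound forces the orbit of `f₁` to span a dense subspace, and any
intertwiner sending `f₁` to `f₂` is determined on that orbit.
-/

open MeasureTheory
noncomputable section

namespace ContinuousLinearEquiv

variable {𝕜 E F : Type*} [RCLike 𝕜] [NormedAddCommGroup E] [InnerProductSpace 𝕜 E]
  [CompleteSpace E] [NormedAddCommGroup F] [InnerProductSpace 𝕜 F] [CompleteSpace F]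

def adjoint (V : E ≃L[𝕜] F) : F ≃L[𝕜] E :=
  .equivOfInverse' (ContinuousLinearMap.adjoint (V : E →L[𝕜] F))
    (ContinuousLinearMap.adjoint (V.symm : F →L[𝕜] E))
    (by
      rw [← ContinuousLinearMap.adjoint_comp, V.coe_symm_comp_coe, ContinuousLinearMap.adjoint_id])
    (by
      rw [← ContinuousLinearMap.adjoint_comp, V.coe_comp_coe_symm, ContinuousLinearMap.adjoint_id])

theorem adjoint_inner_left (V : E ≃L[𝕜] F) (x : E) (y : F) :
    inner 𝕜 (V.adjoint y) x = inner 𝕜 y (V x) :=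
  ContinuousLinearMap.adjoint_inner_left _ x y

end ContinuousLinearEquiv

section Frame

variable {I H₁ H₂ : Type*} [NormedAddCommGroup H₁] [InnerProductSpace ℂ H₁]
  [NormedAddCommGroup H₂] [InnerProductSpace ℂ H₂]

theorem IsFrame.of_inner_eq_inner_apply {F : I → H₁} {G : I → H₂} (hF : IsFrame F)
    (E : H₂ ≃L[ℂ] H₁) (hG : ∀ g i, inner ℂ g (G i) = inner ℂ (E g) (F i)) : IsFrame G := by
  obtain ⟨A, B, hA, hB, hAB⟩ := hF
  obtain ⟨c, hc, hE_symm⟩ := (E.symm : H₁ →L[ℂ] H₂).bound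
  obtain ⟨C, hC, hE⟩ := (E : H₂ →L[ℂ] H₁).bound
  refine ⟨A / c ^ 2, B * C ^ 2, by positivity, by positivity, fun g => ?_⟩
  have hlower : ‖g‖ ^ 2 ≤ c ^ 2 * ‖E g‖ ^ 2 := by
    rw [← mul_pow]
    simpa using pow_le_pow_left₀ (norm_nonneg _) (hE_symm (E g)) 2
  have hupper : ‖E g‖ ^ 2 ≤ C ^ 2 * ‖g‖ ^ 2 := by
    rw [← mul_pow]
    exact pow_le_pow_left₀ (norm_nonneg _) (hE g) 2
  obtain ⟨hsum_lower, hsum_upper⟩ := hAB (E g)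
  simp only [hG]
  constructor
  · calc A / c ^ 2 * ‖g‖ ^ 2 ≤ A / c ^ 2 * (c ^ 2 * ‖E g‖ ^ 2) := by gcongr
      _ = A * ‖E g‖ ^ 2 := by field_simp
      _ ≤ _ := hsum_lower
  · calc _ ≤ B * ‖E g‖ ^ 2 := hsum_upper
      _ ≤ B * (C ^ 2 * ‖g‖ ^ 2) := by gcongr
      _ = B * C ^ 2 * ‖g‖ ^ 2 := by ring

variable [CompleteSpace H₁] [CompleteSpace H₂]

theorem IsFrame.map_equiv {F : I → H₁} (hF : IsFrame F) (V : H₁ ≃L[ℂ] H₂) :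
    IsFrame fun i => V (F i) :=
  hF.of_inner_eq_inner_apply V.adjoint fun g i => (V.adjoint_inner_left (F i) g).symm

theorem isFrame_map_equiv_iff {F : I → H₁} (V : H₁ ≃L[ℂ] H₂) :
    (IsFrame fun i => V (F i)) ↔ IsFrame F :=
  ⟨fun h => by simpa using h.map_equiv V.symm, fun h => h.map_equiv V⟩

theorem IsFrame.dense_span {F : I → H₁} (hF : IsFrame F) :
    Dense (Submodule.span ℂ (Set.range F) : Set H₁) := by
  obtain ⟨A, _, hA, _, hAB⟩ := hF
  rw [Submodule.dense_iff_topologicalClosure_eq_top, Submodule.topologicalClosure_eq_top_iff,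
    Submodule.eq_bot_iff]
  intro g hg
  have horth : ∀ i, inner ℂ g (F i) = 0 := fun i =>
    inner_eq_zero_symm.1 (hg _ (Submodule.subset_span ⟨i, rfl⟩))
  have hbound := (hAB g).1
  simp only [horth, norm_zero, zero_pow two_ne_zero, tsum_zero] at hbound
  simpa using nonpos_of_mul_nonpos_right hbound hA

end Frame

theorem ContinuousLinearMap.pow_apply_of_intertwines {R M₁ M₂ : Type*} [Semiring R]
    [AddCommMonoid M₁] [Module R M₁] [TopologicalSpace M₁] [AddCommMonoid M₂] [Module R M₂]
    [TopologicalSpace M₂] {T₁ : M₁ →L[R] M₁} {T₂ : M₂ →L[R] M₂} {W : M₁ → M₂}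
    (h : ∀ x, T₂ (W x) = W (T₁ x)) (n : ℕ) (x : M₁) : (T₂ ^ n) (W x) = W ((T₁ ^ n) x) := by
  simp only [FunLike.coe_pow_eq_iterate]
  exact (Function.Semiconj.iterate_right (fun x => (h x).symm) n x).symm

theorem ContinuousLinearMap.eq_of_intertwines_of_dense_orbit {R M₁ M₂ : Type*} [Semiring R]
    [AddCommMonoid M₁] [Module R M₁] [TopologicalSpace M₁] [AddCommMonoid M₂] [Module R M₂]
    [TopologicalSpace M₂] [T2Space M₂] {T₁ : M₁ →L[R] M₁} {T₂ : M₂ →L[R] M₂} {f : M₁}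
    (hf : Dense (Submodule.span R (Set.range fun n : ℕ => (T₁ ^ n) f) : Set M₁))
    {V W : M₁ →L[R] M₂} (hV : ∀ x, T₂ (V x) = V (T₁ x)) (hW : ∀ x, T₂ (W x) = W (T₁ x))
    (hVW : V f = W f) : V = W := by
  refine ext_on hf ?_
  rintro _ ⟨n, rfl⟩
  simp only [← pow_apply_of_intertwines hV, ← pow_apply_of_intertwines hW, hVW]

/-- If `(T₁,f₁)` and `(T₂,f₂)` are similar via the bounded bijective operator `V`, then
`(T₁ⁿf₁)_{n∈ℕ}` is a frame for `H₁` iff `(T₂ⁿf₂)_{n∈ℕ}` is a frame for `H₂`; in the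
affirmative case `V` is the unique such intertwiner. -/
theorem similar_pairs_frame_iff_nat
    {H₁ H₂ : Type*} [NormedAddCommGroup H₁] [InnerProductSpace ℂ H₁] [CompleteSpace H₁]
    [NormedAddCommGroup H₂] [InnerProductSpace ℂ H₂] [CompleteSpace H₂]
    (T₁ : H₁ →L[ℂ] H₁) (T₂ : H₂ →L[ℂ] H₂) (f₁ : H₁) (f₂ : H₂)
    (V : H₁ ≃L[ℂ] H₂) (hV : ∀ x : H₁, T₂ (V x) = V (T₁ x)) (hf : f₂ = V f₁) :
    ((IsFrame fun n : ℕ => (T₁ ^ n) f₁) ↔ (IsFrame fun n : ℕ => (T₂ ^ n) f₂)) ∧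
    ((IsFrame fun n : ℕ => (T₁ ^ n) f₁) →
      ∀ W : H₁ ≃L[ℂ] H₂, (∀ x : H₁, T₂ (W x) = W (T₁ x)) → f₂ = W f₁ → W = V) := by
  have horbit : ∀ n : ℕ, (T₂ ^ n) f₂ = V ((T₁ ^ n) f₁) := fun n => by
    rw [hf, ContinuousLinearMap.pow_apply_of_intertwines hV]
  refine ⟨by simp only [horbit, isFrame_map_equiv_iff], fun hframe W hW hfW => ?_⟩
  exact ContinuousLinearEquiv.coe_inj.1 <|
    ContinuousLinearMap.eq_of_intertwines_of_dense_orbit hframe.dense_span hW hV (hfW ▸ hf)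
end
end

section
/- Let h be an inner function. Then A_hⁿ φ_h = P_{H_h}(zⁿ) for all n ∈ ℕ, where zⁿ denotes the function z ↦ zⁿ in L²_+. Consequently, (A_hⁿ φ_h)_{n∈ℕ} is a Parseval frame for H_h, i.e., ∑_{n∈ℕ} |⟨f, A_hⁿφ_h⟩|² = ‖f‖² for all f ∈ H_h. If moreover H_h is infinite-dimensional, this Parseval frame is overcomplete. -/
open MeasureTheory AddCircle
noncomputable section

instance : Fact ((0:ℝ) < 1) := ⟨one_pos⟩

section MulCLM

variable {α : Type*} [MeasurableSpace α] {μ : Measure α}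

theorem memℒp_mul_of_ae_bound (φ : α → ℂ) (hm : AEStronglyMeasurable φ μ)
    (hb : ∀ᵐ x ∂μ, ‖φ x‖ ≤ 1) (f : Lp ℂ 2 μ) : MemLp (fun x => φ x * f x) 2 μ := by
  refine MemLp.of_le (Lp.memLp f) (hm.mul (Lp.aestronglyMeasurable f)) ?_
  filter_upwards [hb] with x hx
  calc ‖φ x * f x‖ = ‖φ x‖ * ‖f x‖ := norm_mul _ _
  _ ≤ 1 * ‖f x‖ := by gcongr
  _ = ‖f x‖ := one_mul _

/-- Multiplication by a measurable function bounded by `1` a.e., as a bounded operator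
on `L²(μ)`. -/
def mulCLM (φ : α → ℂ) (hm : AEStronglyMeasurable φ μ) (hb : ∀ᵐ x ∂μ, ‖φ x‖ ≤ 1) :
    Lp ℂ 2 μ →L[ℂ] Lp ℂ 2 μ := by
  refine LinearMap.mkContinuous
    { toFun := fun f => (memℒp_mul_of_ae_bound φ hm hb f).toLp (fun x => φ x * f x)
      map_add' := ?_
      map_smul' := ?_ } 1 ?_
  · intro f g
    refine Lp.ext ?_
    filter_upwards [MemLp.coeFn_toLp (memℒp_mul_of_ae_bound φ hm hb (f + g)),
      MemLp.coeFn_toLp (memℒp_mul_of_ae_bound φ hm hb f),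
      MemLp.coeFn_toLp (memℒp_mul_of_ae_bound φ hm hb g),
      Lp.coeFn_add f g,
      Lp.coeFn_add ((memℒp_mul_of_ae_bound φ hm hb f).toLp _)
        ((memℒp_mul_of_ae_bound φ hm hb g).toLp _)] with x h1 h2 h3 h4 h5
    rw [h1, h5]
    simp only [Pi.add_apply, h2, h3, h4]
    ring
  · intro c f
    refine Lp.ext ?_
    filter_upwards [MemLp.coeFn_toLp (memℒp_mul_of_ae_bound φ hm hb (c • f)),
      MemLp.coeFn_toLp (memℒp_mul_of_ae_bound φ hm hb f), Lp.coeFn_smul c f,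
      Lp.coeFn_smul c ((memℒp_mul_of_ae_bound φ hm hb f).toLp _)] with x h1 h2 h3 h4
    simp only [RingHom.id_apply]
    rw [h1, h4]
    simp only [Pi.smul_apply, h2, h3, smul_eq_mul]
    ring
  · intro f
    simp only [LinearMap.coe_mk, AddHom.coe_mk, one_mul]
    rw [Lp.norm_toLp, Lp.norm_def]
    refine ENNReal.toReal_mono (Lp.eLpNorm_ne_top f) ?_
    refine eLpNorm_mono_ae ?_
    filter_upwards [hb] with x hx
    calc ‖φ x * f x‖ = ‖φ x‖ * ‖f x‖ := norm_mul _ _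
    _ ≤ 1 * ‖f x‖ := by gcongr
    _ = ‖f x‖ := one_mul _

end MulCLM

lemma norm_fourier_apply (n : ℤ) (x : UnitAddCircle) : ‖fourier n x‖ = 1 := by
  rw [fourier_apply]
  exact Circle.norm_coe _

/-- `L² = L²(𝕋)` with respect to the normalized arc-length (Haar) measure. -/
abbrev L2T := Lp ℂ 2 (haarAddCircle : Measure UnitAddCircle)

/-- The Hardy subspace `L²₊` of `L²(𝕋)`: all `f ∈ L²` whose negative Fourier
coefficients vanish. -/
def L2plus : Submodule ℂ L2T where
  carrier := {f : L2T | ∀ n : ℤ, n < 0 → fourierBasis.repr f n = 0}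
  add_mem' := by
    intro f g hf hg n hn
    simp [map_add, hf n hn, hg n hn]
  zero_mem' := by
    intro n hn
    simp
  smul_mem' := by
    intro c f hf n hn
    simp [_root_.map_smul, hf n hn]

lemma isClosed_L2plus : IsClosed (L2plus : Set L2T) := by
  have hset : (L2plus : Set L2T) =
      ⋂ n : {n : ℤ // n < 0}, {f : L2T | fourierBasis.repr f (n : ℤ) = 0} := by
    ext f
    simp only [Set.mem_iInter, Set.mem_setOf_eq, Subtype.forall]
    rfl
  rw [hset]
  refine isClosed_iInter fun n => ?_
  have hcont : Continuous fun f : L2T => fourierBasis.repr f (n : ℤ) := by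
    have : (fun f : L2T => fourierBasis.repr f (n : ℤ)) =
        fun f : L2T => (inner ℂ (fourierBasis (n : ℤ)) f : ℂ) := by
      funext f
      exact fourierBasis.repr_apply_apply f (n : ℤ)
    rw [this]
    exact (innerSL ℂ (fourierBasis (n : ℤ))).continuous
  exact isClosed_eq hcont continuous_const

/-- Multiplication `M_𝕋⁺`-style operator: multiplication by the free variable `z`
on all of `L²(𝕋)`. -/
def Mz : L2T →L[ℂ] L2T :=
  mulCLM (⇑(fourier 1)) ((map_continuous (fourier 1)).aestronglyMeasurable)
    (Filter.Eventually.of_forall fun x => le_of_eq (norm_fourier_apply 1 x))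

/-- Multiplication by (a representative of) `h ∈ L²` with `|h| ≤ 1` a.e., as a bounded
operator on `L²`. -/
def mulByLp (h : L2T) (hb : ∀ᵐ z ∂(haarAddCircle : Measure UnitAddCircle), ‖h z‖ ≤ 1) :
    L2T →L[ℂ] L2T :=
  mulCLM (⇑h) (Lp.aestronglyMeasurable h) hb

/-- The subspace `hL²₊`. -/
def hL2plus (h : L2T) (hb : ∀ᵐ z ∂(haarAddCircle : Measure UnitAddCircle), ‖h z‖ ≤ 1) :
    Submodule ℂ L2T :=
  L2plus.map (mulByLp h hb : L2T →ₗ[ℂ] L2T)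

/-- The model space `H_h = L²₊ ⊖ hL²₊`. -/
def Hh (h : L2T) (hb : ∀ᵐ z ∂(haarAddCircle : Measure UnitAddCircle), ‖h z‖ ≤ 1) :
    Submodule ℂ L2T :=
  L2plus ⊓ (hL2plus h hb)ᗮ

lemma isClosed_Hh (h : L2T) (hb : ∀ᵐ z ∂(haarAddCircle : Measure UnitAddCircle), ‖h z‖ ≤ 1) :
    IsClosed ((Hh h hb : Submodule ℂ L2T) : Set L2T) := by
  have : ((Hh h hb : Submodule ℂ L2T) : Set L2T) =
      (L2plus : Set L2T) ∩ ((hL2plus h hb)ᗮ : Set L2T) := rfl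
  rw [this]
  exact isClosed_L2plus.inter (hL2plus h hb).isClosed_orthogonal

instance completeSpace_Hh (h : L2T)
    (hb : ∀ᵐ z ∂(haarAddCircle : Measure UnitAddCircle), ‖h z‖ ≤ 1) :
    CompleteSpace ↥(Hh h hb) :=
  (isClosed_Hh h hb).completeSpace_coe

/-- The compression `A_h` of `M_𝕋⁺` to `H_h`. -/
def Ah (h : L2T) (hb : ∀ᵐ z ∂(haarAddCircle : Measure UnitAddCircle), ‖h z‖ ≤ 1) :
    ↥(Hh h hb) →L[ℂ] ↥(Hh h hb) :=
  (Hh h hb).orthogonalProjectionOnto ∘L (Mz ∘L (Hh h hb).subtypeL)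

/-- The constant function `1` in `L²(𝕋)`. -/
def oneT : L2T := (memLp_const (1 : ℂ)).toLp _

/-- The vector `φ_h = P_{H_h} 1`. -/
def phih (h : L2T) (hb : ∀ᵐ z ∂(haarAddCircle : Measure UnitAddCircle), ‖h z‖ ≤ 1) :
    ↥(Hh h hb) :=
  (Hh h hb).orthogonalProjectionOnto oneT

/-- `(F n)` is a Riesz basis: the image of an orthonormal basis under a bounded
bijective operator. -/
def IsRieszBasis {I H : Type*} [NormedAddCommGroup H] [InnerProductSpace ℂ H] (F : I → H) : Prop :=
  ∃ (e : HilbertBasis I ℂ H) (V : H ≃L[ℂ] H), ∀ n, F n = V (e n)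

/-!
Let `K` be the closure of `hL²₊`. As `K ⊆ L²₊` and `H_h = L²₊ ⊖ K`, a vector of `L²₊` orthogonal
to `H_h` lies in `K`, and `zK ⊆ K`. Applied to `w = zⁿ - P_{H_h} zⁿ` this gives
`A_h (P_{H_h} zⁿ) = P_{H_h}(zⁿ⁺¹ - z w) = P_{H_h} zⁿ⁺¹`, whence `A_hⁿ φ_h = P_{H_h} zⁿ`.
For `f ∈ H_h` then `⟨f, A_hⁿ φ_h⟩ = ⟨f, zⁿ⟩`, and the frame identity is Parseval's identity
on `L²₊`. Finally `h ∈ hL²₊` gives `0 = P_{H_h} h = ∑ ĥ(n) A_hⁿ φ_h`; were the orbit a Riesz basis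
`(V eₙ)`, all `ĥ(n)` would vanish, i.e. `h = 0`, which is impossible for an inner function.
-/

open scoped InnerProductSpace

section OrthogonalComplement

variable {𝕜 E : Type*} [RCLike 𝕜] [NormedAddCommGroup E] [InnerProductSpace 𝕜 E]

theorem Submodule.mem_of_mem_orthogonal_inf_orthogonal {U K : Submodule 𝕜 E}
    [K.HasOrthogonalProjection] (hKU : K ≤ U) {w : E} (hwU : w ∈ U) (hw : w ∈ (U ⊓ Kᗮ)ᗮ) :
    w ∈ K := by
  have hd : w - K.starProjection w ∈ U ⊓ Kᗮ :=
    ⟨U.sub_mem hwU (hKU (K.starProjection_apply_mem w)), K.sub_starProjection_mem_orthogonal w⟩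
  have hd0 : ⟪w - K.starProjection w, w - K.starProjection w⟫_𝕜 = 0 := by
    rw [inner_sub_right, Submodule.inner_right_of_mem_orthogonal hd hw,
      Submodule.inner_left_of_mem_orthogonal (K.starProjection_apply_mem w) hd.2, sub_zero]
  rw [← K.starProjection_eq_self_iff, eq_comm, ← sub_eq_zero]
  exact inner_self_eq_zero.mp hd0

theorem Orthonormal.inner_left_eq_of_hasSum {ι : Type*} {v : ι → E} (hv : Orthonormal 𝕜 v)
    {c : ι → 𝕜} {x : E} (hx : HasSum (fun i => c i • v i) x) (i : ι) : ⟪v i, x⟫_𝕜 = c i := by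
  classical
  have hs := hx.mapL (innerSL 𝕜 (v i))
  simp only [map_smul, innerSL_apply_apply, orthonormal_iff_ite.mp hv, smul_eq_mul, mul_ite,
    mul_one, mul_zero] at hs
  simpa using hs.unique (hasSum_single i fun j hj => if_neg hj.symm)

end OrthogonalComplement

theorem MeasureTheory.Lp.ne_zero_of_ae_norm_eq_one {α E : Type*} [MeasurableSpace α]
    {μ : Measure α} [NeZero μ] [NormedAddCommGroup E] {p : ENNReal} {f : Lp E p μ}
    (hf : ∀ᵐ x ∂μ, ‖f x‖ = 1) : f ≠ 0 := by
  rintro rfl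
  obtain ⟨x, hx⟩ := hf.exists
  simp at hx

theorem mulCLM_coeFn {α : Type*} [MeasurableSpace α] {μ : Measure α} (φ : α → ℂ)
    (hm : AEStronglyMeasurable φ μ) (hb : ∀ᵐ x ∂μ, ‖φ x‖ ≤ 1) (f : Lp ℂ 2 μ) :
    mulCLM φ hm hb f =ᵐ[μ] fun x => φ x * f x :=
  (memℒp_mul_of_ae_bound φ hm hb f).coeFn_toLp

theorem Mz_coeFn (f : L2T) : Mz f =ᵐ[haarAddCircle] fun x => fourier 1 x * f x :=
  mulCLM_coeFn _ _ _ f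

theorem mulByLp_coeFn (h : L2T) (hb : ∀ᵐ z ∂(haarAddCircle : Measure UnitAddCircle), ‖h z‖ ≤ 1)
    (f : L2T) : mulByLp h hb f =ᵐ[haarAddCircle] fun x => h x * f x :=
  mulCLM_coeFn _ _ _ f

theorem Mz_comm_mulByLp (h : L2T)
    (hb : ∀ᵐ z ∂(haarAddCircle : Measure UnitAddCircle), ‖h z‖ ≤ 1) (f : L2T) :
    Mz (mulByLp h hb f) = mulByLp h hb (Mz f) := by
  refine Lp.ext ?_
  filter_upwards [Mz_coeFn (mulByLp h hb f), mulByLp_coeFn h hb f, mulByLp_coeFn h hb (Mz f),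
    Mz_coeFn f] with x h1 h2 h3 h4
  rw [h1, h2, h3, h4, mul_left_comm]

theorem Mz_fourierLp (n : ℤ) : Mz (fourierLp 2 n) = fourierLp 2 (n + 1) := by
  refine Lp.ext ?_
  filter_upwards [Mz_coeFn (fourierLp 2 n), coeFn_fourierLp 2 n, coeFn_fourierLp 2 (n + 1)]
    with x h1 h2 h3
  rw [h1, h2, h3, ← fourier_add, add_comm 1 n]

theorem oneT_eq_fourierLp_zero : oneT = fourierLp 2 0 := by
  refine Lp.ext ?_
  filter_upwards [(memLp_const (1 : ℂ)).coeFn_toLp, coeFn_fourierLp 2 0] with x h1 h2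
  rw [show oneT x = 1 from h1, h2, fourier_zero]

theorem repr_fourierLp (n k : ℤ) :
    fourierBasis.repr (fourierLp 2 n : L2T) k = if k = n then 1 else 0 := by
  rw [fourierBasis.repr_apply_apply, coe_fourierBasis]
  exact orthonormal_iff_ite.mp orthonormal_fourier k n

theorem repr_mulByLp_fourierLp (h : L2T)
    (hb : ∀ᵐ z ∂(haarAddCircle : Measure UnitAddCircle), ‖h z‖ ≤ 1) (n k : ℤ) :
    fourierBasis.repr (mulByLp h hb (fourierLp 2 n)) k = fourierBasis.repr h (k - n) := by
  rw [fourierBasis.repr_apply_apply, fourierBasis.repr_apply_apply, coe_fourierBasis,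
    L2.inner_def, L2.inner_def]
  refine integral_congr_ae ?_
  filter_upwards [mulByLp_coeFn h hb (fourierLp 2 n), coeFn_fourierLp 2 n, coeFn_fourierLp 2 k,
    coeFn_fourierLp 2 (k - n)] with x h1 h2 h3 h4
  simp only [RCLike.inner_apply]
  rw [h1, h2, h3, h4, ← fourier_neg, ← fourier_neg, sub_eq_add_neg, neg_add, neg_neg,
    fourier_add]
  ring

theorem fourierLp_natCast_mem_L2plus (n : ℕ) : fourierLp 2 (n : ℤ) ∈ L2plus := fun m hm => by
  rw [repr_fourierLp, if_neg (by omega)]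

theorem hasSum_natCast_iff_of_mem_L2plus {M : Type*} [AddCommMonoid M] [TopologicalSpace M]
    {f : L2T} (hf : f ∈ L2plus) {g : ℤ → M} (hg : ∀ k, fourierBasis.repr f k = 0 → g k = 0)
    {a : M} : HasSum (fun n : ℕ => g n) a ↔ HasSum g a :=
  Nat.cast_injective.hasSum_iff fun k hk =>
    hg k (hf k (not_le.mp fun hk0 => hk ⟨k.toNat, Int.toNat_of_nonneg hk0⟩))

theorem hasSum_fourierLp_of_mem_L2plus {f : L2T} (hf : f ∈ L2plus) :
    HasSum (fun n : ℕ => fourierBasis.repr f n • fourierLp 2 (n : ℤ)) f := by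
  have hs := fourierBasis.hasSum_repr f
  rw [coe_fourierBasis] at hs
  exact (hasSum_natCast_iff_of_mem_L2plus hf fun k hk => by rw [hk, zero_smul]).mpr hs

theorem hasSum_sq_norm_repr_of_mem_L2plus {f : L2T} (hf : f ∈ L2plus) :
    HasSum (fun n : ℕ => ‖fourierBasis.repr f n‖ ^ 2) (‖f‖ ^ 2) := by
  refine (hasSum_natCast_iff_of_mem_L2plus hf (g := fun k => ‖fourierBasis.repr f k‖ ^ 2)
    fun k hk => by simp [hk]).mpr ?_
  simpa using lp.hasSum_norm (p := 2) (by norm_num) (fourierBasis.repr f)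

theorem map_mem_L2plus_of_map_fourierLp_mem (T : L2T →L[ℂ] L2T)
    (hT : ∀ n : ℕ, T (fourierLp 2 n) ∈ L2plus) {f : L2T} (hf : f ∈ L2plus) : T f ∈ L2plus := by
  rw [← ((hasSum_fourierLp_of_mem_L2plus hf).mapL T).tsum_eq]
  exact tsum_mem isClosed_L2plus fun n => by rw [map_smul]; exact L2plus.smul_mem _ (hT n)

theorem Mz_mem_L2plus {f : L2T} (hf : f ∈ L2plus) : Mz f ∈ L2plus :=
  map_mem_L2plus_of_map_fourierLp_mem Mz
    (fun n => by rw [Mz_fourierLp, ← Nat.cast_succ]; exact fourierLp_natCast_mem_L2plus _) hf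

theorem mulByLp_mem_L2plus {h : L2T}
    (hb : ∀ᵐ z ∂(haarAddCircle : Measure UnitAddCircle), ‖h z‖ ≤ 1)
    (hmem : h ∈ L2plus) {f : L2T} (hf : f ∈ L2plus) : mulByLp h hb f ∈ L2plus :=
  map_mem_L2plus_of_map_fourierLp_mem (mulByLp h hb)
    (fun n m hm => by rw [repr_mulByLp_fourierLp]; exact hmem _ (by omega)) hf

section ModelSpace

variable {h : L2T} {hb : ∀ᵐ z ∂(haarAddCircle : Measure UnitAddCircle), ‖h z‖ ≤ 1}

theorem hL2plus_le_L2plus (hmem : h ∈ L2plus) : hL2plus h hb ≤ L2plus := by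
  rintro _ ⟨f, hf, rfl⟩
  exact mulByLp_mem_L2plus hb hmem hf

theorem hL2plus_mem_invtSubmodule_Mz :
    hL2plus h hb ∈ Module.End.invtSubmodule (Mz : L2T →ₗ[ℂ] L2T) := by
  rw [Module.End.mem_invtSubmodule_iff_map_le]
  rintro _ ⟨_, ⟨f, hf, rfl⟩, rfl⟩
  exact ⟨Mz f, Mz_mem_L2plus hf, (Mz_comm_mulByLp h hb f).symm⟩

theorem Hh_eq_inf_orthogonal_topologicalClosure :
    Hh h hb = L2plus ⊓ (hL2plus h hb).topologicalClosureᗮ := by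
  rw [Submodule.orthogonal_closure, Hh]

theorem Mz_mem_orthogonal_Hh (hmem : h ∈ L2plus) {w : L2T} (hw : w ∈ L2plus)
    (hwH : w ∈ (Hh h hb)ᗮ) : Mz w ∈ (Hh h hb)ᗮ := by
  set K := (hL2plus h hb).topologicalClosure
  have : CompleteSpace K := (Submodule.isClosed_topologicalClosure _).completeSpace_coe
  rw [Hh_eq_inf_orthogonal_topologicalClosure] at hwH ⊢
  have hwK : w ∈ K := Submodule.mem_of_mem_orthogonal_inf_orthogonal
    (Submodule.topologicalClosure_minimal _ (hL2plus_le_L2plus hmem) isClosed_L2plus) hw hwH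
  exact K.le_orthogonal_orthogonal.trans (Submodule.orthogonal_le inf_le_right)
    (Submodule.topologicalClosure_mem_invtSubmodule hL2plus_mem_invtSubmodule_Mz hwK)

theorem Ah_apply (x : Hh h hb) : Ah h hb x = (Hh h hb).orthogonalProjectionOnto (Mz x) := rfl

theorem Ah_pow_phih (hmem : h ∈ L2plus) (n : ℕ) :
    (Ah h hb ^ n) (phih h hb) = (Hh h hb).orthogonalProjectionOnto (fourierLp 2 (n : ℤ)) := by
  induction n with
  | zero => rw [pow_zero, one_apply_eq_self, phih, oneT_eq_fourierLp_zero]; rfl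
  | succ n ih =>
    set P := (Hh h hb).orthogonalProjectionOnto
    set u : L2T := fourierLp 2 (n : ℤ)
    have hw : u - P u ∈ (Hh h hb)ᗮ := (Hh h hb).sub_starProjection_mem_orthogonal u
    have hwplus : u - P u ∈ L2plus :=
      L2plus.sub_mem (fourierLp_natCast_mem_L2plus n) (P u).2.1
    calc (Ah h hb ^ (n + 1)) (phih h hb) = P (Mz u - Mz (u - P u)) := by
          rw [pow_succ', mul_apply_eq_comp, ih, Ah_apply, ← map_sub, sub_sub_cancel]
      _ = P (fourierLp 2 (n + 1 : ℕ)) := by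
          rw [map_sub, Submodule.orthogonalProjectionOnto_apply_of_mem_orthogonal
            (Mz_mem_orthogonal_Hh hmem hwplus hw), sub_zero, Mz_fourierLp, Nat.cast_succ]

theorem hasSum_sq_norm_inner_Ah_pow_phih (hmem : h ∈ L2plus) (f : Hh h hb) :
    HasSum (fun n : ℕ => ‖⟪f, (Ah h hb ^ n) (phih h hb)⟫_ℂ‖ ^ 2) (‖f‖ ^ 2) := by
  rw [← Submodule.norm_coe f]
  convert hasSum_sq_norm_repr_of_mem_L2plus f.2.1 using 2 with n
  rw [Ah_pow_phih hmem, Submodule.inner_orthogonalProjectionOnto_eq_of_mem_left, norm_inner_symm,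
    fourierBasis.repr_apply_apply, coe_fourierBasis]

theorem hL2plus_le_orthogonal_Hh : hL2plus h hb ≤ (Hh h hb)ᗮ := fun _ hx _ hg =>
  Submodule.inner_left_of_mem_orthogonal hx hg.2

theorem self_mem_hL2plus : h ∈ hL2plus h hb := by
  refine ⟨oneT, ?_, Lp.ext ?_⟩
  · rw [oneT_eq_fourierLp_zero]
    exact fourierLp_natCast_mem_L2plus 0
  · filter_upwards [mulByLp_coeFn h hb oneT, (memLp_const (1 : ℂ)).coeFn_toLp] with x h1 h2
    rw [ContinuousLinearMap.coe_coe, h1, show oneT x = 1 from h2, mul_one]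

theorem hasSum_repr_smul_Ah_pow_phih (hmem : h ∈ L2plus) :
    HasSum (fun n : ℕ => fourierBasis.repr h n • (Ah h hb ^ n) (phih h hb)) 0 := by
  have hPh : (Hh h hb).orthogonalProjectionOnto h = 0 :=
    Submodule.orthogonalProjectionOnto_eq_zero_iff.mpr
      (hL2plus_le_orthogonal_Hh self_mem_hL2plus)
  simpa only [map_smul, Ah_pow_phih hmem, hPh] using
    (hasSum_fourierLp_of_mem_L2plus hmem).mapL (Hh h hb).orthogonalProjectionOnto

theorem not_isRieszBasis_Ah_pow_phih (hmem : h ∈ L2plus) (hne : h ≠ 0) :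
    ¬ IsRieszBasis fun n : ℕ => (Ah h hb ^ n) (phih h hb) := by
  rintro ⟨e, V, hV⟩
  have hs := (hasSum_repr_smul_Ah_pow_phih hmem).mapL (V.symm : Hh h hb →L[ℂ] Hh h hb)
  simp only [hV, map_smul, ContinuousLinearEquiv.coe_coe, V.symm_apply_apply, map_zero] at hs
  have hcoeff (n : ℕ) : fourierBasis.repr h n = 0 := by
    rw [← e.orthonormal.inner_left_eq_of_hasSum hs n, inner_zero_right]
  exact hne ((hasSum_fourierLp_of_mem_L2plus hmem).unique (by simp [hcoeff]))

end ModelSpace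

/-- For an inner function `h`, one has `A_hⁿ φ_h = P_{H_h}(zⁿ)` for all `n ∈ ℕ`;
consequently `(A_hⁿ φ_h)_{n∈ℕ}` is a Parseval frame for `H_h`, which is overcomplete
whenever `H_h` is infinite-dimensional. -/
theorem Ah_orbit_parseval
    (h : L2T) (hb : ∀ᵐ z ∂(haarAddCircle : Measure UnitAddCircle), ‖h z‖ ≤ 1)
    (hmem : h ∈ L2plus)
    (hinner : ∀ᵐ z ∂(haarAddCircle : Measure UnitAddCircle), ‖h z‖ = 1) :
    (∀ n : ℕ, ((Ah h hb) ^ n) (phih h hb) =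
      (Hh h hb).orthogonalProjectionOnto (fourierLp 2 (n : ℤ))) ∧
    (∀ f : ↥(Hh h hb),
      ∑' n : ℕ, ‖(inner ℂ f (((Ah h hb) ^ n) (phih h hb)) : ℂ)‖ ^ 2 = ‖f‖ ^ 2) ∧
    (¬ FiniteDimensional ℂ ↥(Hh h hb) →
      ¬ IsRieszBasis fun n : ℕ => ((Ah h hb) ^ n) (phih h hb)) :=
  ⟨Ah_pow_phih hmem, fun f => (hasSum_sq_norm_inner_Ah_pow_phih hmem f).tsum_eq,
    fun _ => not_isRieszBasis_Ah_pow_phih hmem (Lp.ne_zero_of_ae_norm_eq_one hinner)⟩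
end
end

section
/- Let H be a complex separable infinite-dimensional Hilbert space, T a bounded bijective linear operator on H, and f₀ ∈ H such that (Tⁿf₀)_{n∈ℤ} is a frame for H with frame operator S. Then S^{-1/2} T S^{1/2} is a unitary operator; in particular, T is similar to a unitary operator. -/
open MeasureTheory
noncomputable section

/-!
Since `T (Tⁿ f₀) = Tⁿ⁺¹ f₀`, reindexing the series defining `S` gives `T S T* = S`.
Inverting, `T* S⁻¹ T = S⁻¹`, so `U = S^{-1/2} T S^{1/2}` satisfies
`U* U = S^{1/2} T* S⁻¹ T S^{1/2} = 1`; being invertible, `U` is unitary.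
-/

open ContinuousLinearMap

theorem star_mul_self_of_mul_mul_star_eq {R : Type*} [Monoid R] [StarMul R] {t ti q qi : R}
    (hti : ti * t = 1) (hq : q * qi = 1) (hqi : qi * q = 1) (hq_sa : IsSelfAdjoint q)
    (h : t * (q * q) * star t = q * q) :
    star (qi * t * q) * (qi * t * q) = 1 := by
  have cancel {a b : R} (hab : a * b = 1) (x : R) : x * a * b = x := by
    rw [mul_assoc, hab, mul_one]
  have hqi_sa : star qi = qi := by
    have : star qi * q = 1 := by rw [← hq_sa.star_eq, ← star_mul, hq, star_one]
    rw [← cancel hq (star qi), this, one_mul]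
  have hstar_t : star t = qi * qi * ti * q * q := by
    have h' := congrArg (qi * qi * ti * ·) h
    simpa only [← mul_assoc, cancel hti, cancel hqi, hqi, one_mul] using h'
  rw [star_mul, star_mul, hqi_sa, hq_sa.star_eq, hstar_t]
  simp only [← mul_assoc, cancel hq, cancel hti, hq, hqi, one_mul]

theorem comp_comp_adjoint_eq_of_map_eq_reindex {𝕜 H ι : Type*} [RCLike 𝕜]
    [NormedAddCommGroup H] [InnerProductSpace 𝕜 H] [CompleteSpace H]
    (T : H ≃L[𝕜] H) {F : ι → H} (σ : ι ≃ ι) (hTF : ∀ i, T (F i) = F (σ i))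
    {S : H →L[𝕜] H} (hS : ∀ f, S f = ∑' i, inner 𝕜 f (F i) • F i) :
    (T : H →L[𝕜] H) ∘L S ∘L adjoint (T : H →L[𝕜] H) = S := by
  ext g
  rw [comp_apply, comp_apply, hS, hS, ContinuousLinearEquiv.coe_coe, T.map_tsum]
  simp only [map_smul, adjoint_inner_left, ContinuousLinearEquiv.coe_coe, hTF]
  exact σ.tsum_eq fun i => inner 𝕜 g (F i) • F i

theorem frame_operator_conjugate_unitary_general
    {H : Type*} [NormedAddCommGroup H] [InnerProductSpace ℂ H] [CompleteSpace H]
    (T : H ≃L[ℂ] H) (f₀ : H)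
    (S : H →L[ℂ] H)
    (hS : ∀ f : H, S f = ∑' n : ℤ, (inner ℂ f ((T ^ n) f₀) : ℂ) • (T ^ n) f₀)
    (Q Qi : H →L[ℂ] H) (hQpos : Q.IsPositive) (hQsq : Q ∘L Q = S)
    (hQi₁ : Q ∘L Qi = ContinuousLinearMap.id ℂ H)
    (hQi₂ : Qi ∘L Q = ContinuousLinearMap.id ℂ H) :
    ((∀ f : H, ‖(Qi ∘L (T : H →L[ℂ] H) ∘L Q) f‖ = ‖f‖) ∧
      Function.Surjective (Qi ∘L (T : H →L[ℂ] H) ∘L Q)) ∧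
    ∃ (W : H ≃L[ℂ] H) (U : H →L[ℂ] H), (∀ f : H, ‖U f‖ = ‖f‖) ∧ Function.Surjective U ∧
      ∀ x : H, T x = W (U (W.symm x)) := by
  have hQQi (x : H) : Q (Qi x) = x := congr($hQi₁ x)
  have hQiQ (x : H) : Qi (Q x) = x := congr($hQi₂ x)
  have hshift (n : ℤ) : T ((T ^ n) f₀) = (T ^ (n + 1)) f₀ := by
    rw [add_comm, zpow_one_add]; rfl
  have hconj : (T : H →L[ℂ] H) * (Q * Q) * star (T : H →L[ℂ] H) = Q * Q := by
    simpa only [star_eq_adjoint, mul_def, hQsq, comp_assoc] using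
      comp_comp_adjoint_eq_of_map_eq_reindex T (Equiv.addRight 1) hshift hS
  have hTT : (T.symm : H →L[ℂ] H) * T = 1 := by ext; simp
  have hstar : star (Qi * T * Q) * (Qi * T * Q) = 1 :=
    star_mul_self_of_mul_mul_star_eq hTT hQi₁ hQi₂ hQpos.isSelfAdjoint hconj
  have hiso : ∀ f : H, ‖(Qi ∘L (T : H →L[ℂ] H) ∘L Q) f‖ = ‖f‖ :=
    (norm_map_iff_adjoint_comp_self _).mpr hstar
  have hsurj : Function.Surjective (Qi ∘L (T : H →L[ℂ] H) ∘L Q) := fun y =>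
    ⟨Qi (T.symm (Q y)), by simp [hQQi, hQiQ]⟩
  refine ⟨⟨hiso, hsurj⟩, .equivOfInverse Q Qi hQiQ hQQi, _, hiso, hsurj, fun x => ?_⟩
  simp [hQQi]

/-- If `(Tⁿf₀)_{n∈ℤ}` is a frame for `H` with frame operator `S` (with `T` bounded and
bijective), and `Q` is the positive square root `S^{1/2}` of `S` with inverse `Qi = S^{-1/2}`,
then `S^{-1/2} T S^{1/2}` is unitary (i.e. an isometric surjection); in particular `T` is
similar to a unitary operator. -/
theorem frame_operator_conjugate_unitary
    {H : Type*} [NormedAddCommGroup H] [InnerProductSpace ℂ H] [CompleteSpace H]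
    [TopologicalSpace.SeparableSpace H] (hdim : ¬ FiniteDimensional ℂ H)
    (T : H ≃L[ℂ] H) (f₀ : H)
    (hframe : IsFrame fun n : ℤ => (T ^ n) f₀)
    (S : H →L[ℂ] H)
    (hS : ∀ f : H, S f = ∑' n : ℤ, (inner ℂ f ((T ^ n) f₀) : ℂ) • (T ^ n) f₀)
    (Q Qi : H →L[ℂ] H) (hQpos : Q.IsPositive) (hQsq : Q ∘L Q = S)
    (hQi₁ : Q ∘L Qi = ContinuousLinearMap.id ℂ H)
    (hQi₂ : Qi ∘L Q = ContinuousLinearMap.id ℂ H) :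
    ((∀ f : H, ‖(Qi ∘L (T : H →L[ℂ] H) ∘L Q) f‖ = ‖f‖) ∧
      Function.Surjective (Qi ∘L (T : H →L[ℂ] H) ∘L Q)) ∧
    ∃ (W : H ≃L[ℂ] H) (U : H →L[ℂ] H), (∀ f : H, ‖U f‖ = ‖f‖) ∧ Function.Surjective U ∧
      ∀ x : H, T x = W (U (W.symm x)) :=
  frame_operator_conjugate_unitary_general T f₀ S hS Q Qi hQpos hQsq hQi₁ hQi₂
end
end
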